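/- If V is a genomic tableau of shape λ and U = reg(V), then the positive part wt(V)⁺ of the weight of V refines the weight wt(U) of U. -/

import Mathlib

open scoped Classical

/-- The cell `x = (row, column)` (0-indexed, English orientation) lies in the Young diagram
whose `r`-th row has length `lam r`. -/
def InShape (lam : ℕ → ℕ) (x : ℕ × ℕ) : Prop := x.2 < lam x.1

/-- `lam : ℕ → ℕ` is the row-length function of a partition: weakly decreasing and
eventually zero. -/
def IsPartitionFn (lam : ℕ → ℕ) : Prop := Antitone lam ∧ ∃ N, ∀ n, N ≤ n → lam n = 0

/-- A genomic tableau of shape `lam`: a semistandard filling (positive entries, rows weakly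
increasing left-to-right, columns strictly increasing top-to-bottom) together with, for each
`i`, a partition of the boxes labeled `i` into genes, encoded by the relation `sameGene`.
Boxes in a common gene share their entry; if a gene has boxes (necessarily with a common
entry) in columns `c₁ < c₃`, then every box with the same entry in an intervening column
belongs to the same gene; and no gene has two boxes in a common row.  Entries and the
relation are normalized (to `0`, resp. `False`) outside the shape so that equality of
structures agrees with equality of tableaux. -/
structure GenomicTableau (lam : ℕ → ℕ) where
  entry : ℕ × ℕ → ℕ
  sameGene : ℕ × ℕ → ℕ × ℕ → Prop
  entry_pos : ∀ x, InShape lam x → 0 < entry x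
  entry_zero : ∀ x, ¬ InShape lam x → entry x = 0
  row_weak : ∀ r c₁ c₂, c₁ ≤ c₂ → InShape lam (r, c₂) → entry (r, c₁) ≤ entry (r, c₂)
  col_strict : ∀ r₁ r₂ c, r₁ < r₂ → InShape lam (r₂, c) → entry (r₁, c) < entry (r₂, c)
  sameGene_mem : ∀ x y, sameGene x y → InShape lam x ∧ InShape lam y
  sameGene_refl : ∀ x, InShape lam x → sameGene x x
  sameGene_symm : ∀ x y, sameGene x y → sameGene y x
  sameGene_trans : ∀ x y z, sameGene x y → sameGene y z → sameGene x z
  sameGene_entry : ∀ x y, sameGene x y → entry x = entry y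
  sameGene_interval : ∀ x y z, sameGene x z → InShape lam y → entry y = entry x →
    x.2 < y.2 → y.2 < z.2 → sameGene x y
  sameGene_row : ∀ x y, sameGene x y → x.1 = y.1 → x = y

/-- `x` is the leftmost box of its gene in the genomic tableau `T`. -/
def IsGeneLeader {lam : ℕ → ℕ} (T : GenomicTableau lam) (x : ℕ × ℕ) : Prop :=
  InShape lam x ∧ ∀ y, T.sameGene x y → x.2 ≤ y.2

/-- The number of `(n+1)`-genes of `T` (counted via their leftmost boxes).  Thus `wt T` is
the weight of `T` as a weak composition indexed from `0`: the variable `x_n` records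
`(n+1)`-genes. -/
noncomputable def wt {lam : ℕ → ℕ} (T : GenomicTableau lam) (n : ℕ) : ℕ :=
  {x | IsGeneLeader T x ∧ T.entry x = n + 1}.ncard

/-- The largest entry of the genomic tableau `T`. -/
noncomputable def maxEntry {lam : ℕ → ℕ} (T : GenomicTableau lam) : ℕ :=
  sSup {n | ∃ x, InShape lam x ∧ T.entry x = n}

/-- The positive part of the weight of `T`: the list of nonzero components of `wt T`,
in order. -/
noncomputable def wtPos {lam : ℕ → ℕ} (T : GenomicTableau lam) : List ℕ :=
  ((List.range (maxEntry T)).map (wt T)).filter (fun e => decide (0 < e))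

/-- The (strong) composition `β` refines `α` if `α` is obtained from `β` by summing
consecutive blocks. -/
def Refines (β α : List ℕ) : Prop :=
  ∃ L : List (List ℕ), L.flatten = β ∧ L.map List.sum = α

/-- The positive part of a weak composition `m`: the list of its nonzero values in order of
the index. -/
noncomputable def posPart (m : ℕ →₀ ℕ) : List ℕ :=
  (m.support.sort (· ≤ ·)).map (fun i => m i)

/-- The fundamental quasisymmetric function `F_α`, a power series in variables indexed
by `ℕ`: the sum of `x^m` over all weak compositions `m` whose positive part refines `α`. -/
noncomputable def fundamentalF (α : List ℕ) : MvPowerSeries ℕ ℤ :=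
  fun m : ℕ →₀ ℕ => if Refines (posPart m) α then 1 else 0

/-- The genomic Schur function `U_lam`: the coefficient of `x^m` is the number of genomic
tableaux of shape `lam` with weight `m`. -/
noncomputable def genomicSchur (lam : ℕ → ℕ) : MvPowerSeries ℕ ℤ :=
  fun m : ℕ →₀ ℕ => (Nat.card {T : GenomicTableau lam // ∀ n, wt T n = m n} : ℤ)

/-- A genomic tableau is quasiYamanouchi if for every `i > 1` appearing in it, some
instance of `i` is weakly west of some instance of `i-1`. -/
def IsQY {lam : ℕ → ℕ} (T : GenomicTableau lam) : Prop :=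
  ∀ i, 2 ≤ i → (∃ x, InShape lam x ∧ T.entry x = i) →
    ∃ x y, InShape lam x ∧ InShape lam y ∧
      T.entry x = i ∧ T.entry y = i - 1 ∧ x.2 ≤ y.2

/-- One step of the regularization algorithm: if `i ≥ 2` appears in `T` and every box
labeled `i` is strictly east of every box labeled `i-1`, replace every label `i` by `i-1`,
keeping the gene decomposition. -/
def RegStep {lam : ℕ → ℕ} (T T' : GenomicTableau lam) : Prop :=
  ∃ i, 2 ≤ i ∧ (∃ x, InShape lam x ∧ T.entry x = i) ∧
    (∀ x y, InShape lam x → InShape lam y → T.entry x = i → T.entry y = i - 1 → y.2 < x.2) ∧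
    (∀ x, T'.entry x = if T.entry x = i then i - 1 else T.entry x) ∧
    (∀ x y, T'.sameGene x y ↔ T.sameGene x y)

/-- An increasing tableau of shape `lam`: positive entries, strictly increasing along rows
and down columns, normalized to `0` outside the shape. -/
structure IncreasingTableau (lam : ℕ → ℕ) where
  entry : ℕ × ℕ → ℕ
  entry_pos : ∀ x, InShape lam x → 0 < entry x
  entry_zero : ∀ x, ¬ InShape lam x → entry x = 0
  row_strict : ∀ r c₁ c₂, c₁ < c₂ → InShape lam (r, c₂) → entry (r, c₁) < entry (r, c₂)
  col_strict : ∀ r₁ r₂ c, r₁ < r₂ → InShape lam (r₂, c) → entry (r₁, c) < entry (r₂, c)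

/-- The largest entry of the increasing tableau `T`. -/
noncomputable def maxEntryInc {lam : ℕ → ℕ} (T : IncreasingTableau lam) : ℕ :=
  sSup {n | ∃ x, InShape lam x ∧ T.entry x = n}

/-- An increasing tableau is gapless if its set of entries is `{1, …, n}` for some `n`. -/
def Gapless {lam : ℕ → ℕ} (T : IncreasingTableau lam) : Prop :=
  ∀ i, 0 < i → i ≤ maxEntryInc T → ∃ x, InShape lam x ∧ T.entry x = i

/-- `i` is a descent of the increasing tableau `T` if some instance of `i` lies in a
strictly higher row than some instance of `i+1`. -/
def IsDescent {lam : ℕ → ℕ} (T : IncreasingTableau lam) (i : ℕ) : Prop :=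
  ∃ x y, InShape lam x ∧ InShape lam y ∧ T.entry x = i ∧ T.entry y = i + 1 ∧ x.1 < y.1

/-- The descent composition of a gapless increasing tableau with entries `{1, …, n}`:
the lengths of the segments of the word `1 2 ⋯ n` cut after each descent. -/
noncomputable def descComp {lam : ℕ → ℕ} (T : IncreasingTableau lam) : List ℕ :=
  let n := maxEntryInc T
  let ds := (((Finset.range n).filter fun i => IsDescent T i).sort (· ≤ ·)) ++ [n]
  (ds.zip (0 :: ds)).map fun p => p.1 - p.2

/-- A standard Young tableau, viewed as an increasing tableau: gapless with all entries
distinct (so the entries are `1, …, |lam|`, each exactly once). -/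
def IsStandard {lam : ℕ → ℕ} (T : IncreasingTableau lam) : Prop :=
  Gapless T ∧ ∀ x y, InShape lam x → InShape lam y → T.entry x = T.entry y → x = y

/-- The column of the leftmost box of the gene of `x` in `T`. -/
noncomputable def leadCol {lam : ℕ → ℕ} (T : GenomicTableau lam) (x : ℕ × ℕ) : ℕ :=
  sInf {c | ∃ y, T.sameGene x y ∧ y.2 = c}

/-- K-standardization `Φ`: order the genes of `T` by listing the `1`-genes left to right,
then the `2`-genes left to right, and so on; `kStd T x` is the (1-based) position of the
gene of `x` in this order (and `0` outside the shape). -/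
noncomputable def kStd {lam : ℕ → ℕ} (T : GenomicTableau lam) (x : ℕ × ℕ) : ℕ :=
  if InShape lam x then
    {y | IsGeneLeader T y ∧ (T.entry y < T.entry x ∨
        (T.entry y = T.entry x ∧ y.2 ≤ leadCol T x))}.ncard
  else 0

/-- A semistandard tableau of shape `lam`, with positive entries, normalized to `0`
outside the shape. -/
structure SemistandardTableau (lam : ℕ → ℕ) where
  entry : ℕ × ℕ → ℕ
  entry_pos : ∀ x, InShape lam x → 0 < entry x
  entry_zero : ∀ x, ¬ InShape lam x → entry x = 0
  row_weak : ∀ r c₁ c₂, c₁ ≤ c₂ → InShape lam (r, c₂) → entry (r, c₁) ≤ entry (r, c₂)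
  col_strict : ∀ r₁ r₂ c, r₁ < r₂ → InShape lam (r₂, c) → entry (r₁, c) < entry (r₂, c)

/-- The number of boxes of `T` with entry `n+1` (matching the variable convention of
`wt`: the variable `x_n` records the entry `n+1`). -/
noncomputable def contentOf {lam : ℕ → ℕ} (T : SemistandardTableau lam) (n : ℕ) : ℕ :=
  {x | InShape lam x ∧ T.entry x = n + 1}.ncard

/-- The Schur function `s_mu` as the generating function of semistandard tableaux of
shape `mu` by content. -/
noncomputable def schurFn (mu : ℕ → ℕ) : MvPowerSeries ℕ ℤ :=
  fun m : ℕ →₀ ℕ => (Nat.card {T : SemistandardTableau mu // ∀ n, contentOf T n = m n} : ℤ)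

/-- The row-length function of the flag-shaped partition `(a, b, 1^k)`. -/
def flagShape (a b k : ℕ) : ℕ → ℕ :=
  fun r => if r = 0 then a else if r = 1 then b else if r < k + 2 then 1 else 0

/-- The homogeneous component of degree `d` of a power series. -/
noncomputable def homComponent (d : ℕ) (f : MvPowerSeries ℕ ℤ) : MvPowerSeries ℕ ℤ :=
  fun m : ℕ →₀ ℕ => if (m.sum fun _ e => e) = d then MvPowerSeries.coeff m f else 0

/-- The complete homogeneous symmetric function `h_k` (`h_0 = 1`, and `h_k = 0` for
`k < 0`): the sum of all monomials of total degree `k`. -/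
noncomputable def hSeries (k : ℤ) : MvPowerSeries ℕ ℤ :=
  fun m : ℕ →₀ ℕ => if ((m.sum fun _ e => e : ℕ) : ℤ) = k then 1 else 0

/-- The Schur function of an arbitrary (strong) composition `α`, via the Jacobi–Trudi
determinant `s_α = det(h_{α_i - i + j})`. -/
noncomputable def schurComp (α : List ℕ) : MvPowerSeries ℕ ℤ :=
  Matrix.det (Matrix.of fun i j : Fin α.length =>
    hSeries ((α.get i : ℤ) - (i : ℕ) + (j : ℕ)))

/-- `e` lies in the `i`-th block (0-indexed) `M_{i+1}(α) = {α_1 + ⋯ + α_i + 1, …,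
α_1 + ⋯ + α_{i+1}}` of the composition `α`. -/
def InBlock (α : List ℕ) (i : ℕ) (e : ℕ) : Prop :=
  (α.take i).sum < e ∧ e ≤ (α.take (i + 1)).sum

/-- The positive part of a weak composition of length `n`. -/
noncomputable def posPartFin {n : ℕ} (m : Fin n →₀ ℕ) : List ℕ :=
  (List.ofFn fun k : Fin n => m k).filter (fun e => decide (0 < e))

/-- The fundamental quasisymmetric polynomial `F_α(x_1, …, x_n)` in `n` variables. -/
noncomputable def fundamentalFFin (n : ℕ) (α : List ℕ) : MvPowerSeries (Fin n) ℤ :=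
  fun m : Fin n →₀ ℕ => if Refines (posPartFin m) α then 1 else 0

/-- The genomic Schur polynomial `U_lam(x_1, …, x_n)`: the generating function of genomic
tableaux with all entries at most `n`, by weight. -/
noncomputable def genomicSchurPoly (lam : ℕ → ℕ) (n : ℕ) : MvPowerSeries (Fin n) ℤ :=
  fun m : Fin n →₀ ℕ =>
    (Nat.card {T : GenomicTableau lam //
      (∀ x, InShape lam x → T.entry x ≤ n) ∧ ∀ k : Fin n, wt T (k : ℕ) = m k} : ℤ)

/-!
A regularization step relabels every `i` as `i - 1` and keeps the genes, so in the weight it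
adds the number of `i`-genes to the number of `(i - 1)`-genes and leaves no `i`-gene. On the
positive part this either sums two adjacent parts or changes nothing, which is a coarsening;
coarsening is a preorder, so the whole chain of steps from `V` to `reg V` coarsens `wt(V)⁺`.
-/

namespace Refines

theorem refl (β : List ℕ) : Refines β β :=
  ⟨β.map fun e => [e], List.flatMap_singleton' β, by simp [Function.comp_def]⟩

theorem sum_eq {β α : List ℕ} (h : Refines β α) : β.sum = α.sum := by
  obtain ⟨L, rfl, rfl⟩ := h
  exact List.sum_flatten

theorem singleton_sum (β : List ℕ) : Refines β [β.sum] :=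
  ⟨[β], by simp, by simp⟩

theorem append {β β' α α' : List ℕ} (h : Refines β α) (h' : Refines β' α') :
    Refines (β ++ β') (α ++ α') := by
  obtain ⟨L, rfl, rfl⟩ := h
  obtain ⟨L', rfl, rfl⟩ := h'
  exact ⟨L ++ L', by simp, by simp⟩

theorem exists_append_of_append {β α α' : List ℕ} (h : Refines β (α ++ α')) :
    ∃ γ γ', β = γ ++ γ' ∧ Refines γ α ∧ Refines γ' α' := by
  obtain ⟨L, rfl, hL⟩ := h
  obtain ⟨L₁, L₂, rfl, h₁, h₂⟩ := List.map_eq_append_iff.mp hL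
  exact ⟨L₁.flatten, L₂.flatten, List.flatten_append, ⟨L₁, rfl, h₁⟩, ⟨L₂, rfl, h₂⟩⟩

theorem trans {γ β α : List ℕ} (hγβ : Refines γ β) (hβα : Refines β α) : Refines γ α := by
  obtain ⟨L, rfl, rfl⟩ := hβα
  induction L generalizing γ with
  | nil =>
    obtain ⟨K, rfl, hK⟩ := hγβ
    rw [List.flatten_nil, List.map_eq_nil_iff] at hK
    subst hK
    exact refl []
  | cons b L ih =>
    obtain ⟨γ₁, γ₂, rfl, h₁, h₂⟩ := exists_append_of_append hγβ
    rw [List.map_cons, ← List.singleton_append, ← h₁.sum_eq]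
    exact (singleton_sum γ₁).append (ih h₂)

instance : Std.Refl Refines := ⟨refl⟩

instance : IsTrans (List ℕ) Refines := ⟨fun _ _ _ => trans⟩

theorem filter_pos_pair (u v : ℕ) :
    Refines ([u, v].filter fun e => decide (0 < e))
      ([u + v, 0].filter fun e => decide (0 < e)) := by
  rcases Nat.eq_zero_or_pos u with rfl | hu <;> rcases Nat.eq_zero_or_pos v with rfl | hv
  · exact refl _
  · simpa [hv] using refl [v]
  · simpa [hu] using refl [u]
  · simpa [hu, hv, Nat.add_pos_left hu] using singleton_sum [u, v]

end Refines

def posPartRange (f : ℕ → ℕ) (M : ℕ) : List ℕ :=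
  ((List.range M).map f).filter fun e => decide (0 < e)

theorem posPartRange_eq_of_le {f : ℕ → ℕ} {M M' : ℕ} (h : M ≤ M')
    (hf : ∀ n, M ≤ n → f n = 0) : posPartRange f M' = posPartRange f M := by
  obtain ⟨k, rfl⟩ := Nat.exists_eq_add_of_le h
  simp +contextual [posPartRange, List.range_add, List.filter_eq_nil_iff, hf]

theorem refines_posPartRange_merge {f g : ℕ → ℕ} {j M : ℕ} (hM : j + 2 ≤ M)
    (hg : ∀ n, n ≠ j → n ≠ j + 1 → g n = f n)
    (hgj : g j = f j + f (j + 1)) (hgj₁ : g (j + 1) = 0) :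
    Refines (posPartRange f M) (posPartRange g M) := by
  obtain ⟨k, rfl⟩ := Nat.exists_eq_add_of_le hM
  have hrange : List.range (j + 2 + k)
      = List.range j ++ [j, j + 1] ++ (List.range k).map (j + 2 + ·) := by
    simp [List.range_add, List.range_succ]
  have hlow : (List.range j).map g = (List.range j).map f :=
    List.map_congr_left fun n hn => hg n (by simp at hn; omega) (by simp at hn; omega)
  have hhigh : ((List.range k).map (j + 2 + ·)).map g = ((List.range k).map (j + 2 + ·)).map f :=
    List.map_congr_left fun n hn => by
      obtain ⟨m, -, rfl⟩ := List.mem_map.mp hn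
      exact hg _ (by omega) (by omega)
  simp only [posPartRange, hrange, List.map_append, List.filter_append, hlow, hhigh]
  refine ((Refines.refl _).append ?_).append (Refines.refl _)
  simpa only [List.map_cons, List.map_nil, hgj, hgj₁] using Refines.filter_pos_pair (f j) (f (j + 1))

theorem IsPartitionFn.finite_setOf_inShape {lam : ℕ → ℕ} (hlam : IsPartitionFn lam) :
    {x : ℕ × ℕ | InShape lam x}.Finite := by
  obtain ⟨hanti, N, hN⟩ := hlam
  refine ((Set.finite_Iio N).prod (Set.finite_Iio (lam 0))).subset ?_
  rintro ⟨r, c⟩ (hx : c < lam r)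
  refine ⟨show r < N from ?_, hx.trans_le (hanti (Nat.zero_le r))⟩
  by_contra! hr
  rw [hN r hr] at hx
  exact Nat.not_lt_zero _ hx

namespace GenomicTableau

variable {lam : ℕ → ℕ}

theorem entry_le_maxEntry (hlam : IsPartitionFn lam) (T : GenomicTableau lam) {x : ℕ × ℕ}
    (hx : InShape lam x) : T.entry x ≤ maxEntry T :=
  le_csSup ((hlam.finite_setOf_inShape.image T.entry).bddAbove) ⟨x, hx, rfl⟩

theorem wt_eq_zero_of_forall {T : GenomicTableau lam} {n : ℕ}
    (h : ∀ x, IsGeneLeader T x → T.entry x ≠ n + 1) : wt T n = 0 := by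
  unfold wt
  convert Set.ncard_empty (ℕ × ℕ)
  exact Set.eq_empty_of_forall_notMem fun x hx => h x hx.1 hx.2

theorem wt_eq_zero_of_maxEntry_le (hlam : IsPartitionFn lam) (T : GenomicTableau lam) {n : ℕ}
    (hn : maxEntry T ≤ n) : wt T n = 0 :=
  wt_eq_zero_of_forall fun x hx => by
    have := T.entry_le_maxEntry hlam hx.1
    omega

theorem wtPos_eq_posPartRange (hlam : IsPartitionFn lam) (T : GenomicTableau lam) {M : ℕ}
    (hM : maxEntry T ≤ M) : wtPos T = posPartRange (wt T) M :=
  (posPartRange_eq_of_le hM fun _ => T.wt_eq_zero_of_maxEntry_le hlam).symm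

section Relabel

variable {T T' : GenomicTableau lam} {k : ℕ}

theorem wt_relabel_of_ne
    (hent : ∀ x, T'.entry x = if T.entry x = k + 2 then k + 1 else T.entry x)
    (hgene : ∀ x y, T'.sameGene x y ↔ T.sameGene x y)
    {n : ℕ} (hn : n ≠ k) (hn₁ : n ≠ k + 1) : wt T' n = wt T n := by
  unfold wt IsGeneLeader
  congr 1
  ext x
  simp only [Set.mem_ofPred_eq, hgene, hent]
  exact and_congr_right fun _ => by split_ifs <;> omega

theorem wt_relabel_succ
    (hent : ∀ x, T'.entry x = if T.entry x = k + 2 then k + 1 else T.entry x) :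
    wt T' (k + 1) = 0 :=
  wt_eq_zero_of_forall fun x _ => by
    rw [hent]
    split_ifs <;> omega

theorem wt_relabel_self (hlam : IsPartitionFn lam)
    (hent : ∀ x, T'.entry x = if T.entry x = k + 2 then k + 1 else T.entry x)
    (hgene : ∀ x y, T'.sameGene x y ↔ T.sameGene x y) :
    wt T' k = wt T k + wt T (k + 1) := by
  have hsplit : {x | IsGeneLeader T' x ∧ T'.entry x = k + 1}
      = {x | IsGeneLeader T x ∧ T.entry x = k + 1}
        ∪ {x | IsGeneLeader T x ∧ T.entry x = k + 1 + 1} := by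
    ext x
    simp only [IsGeneLeader, Set.mem_ofPred_eq, Set.mem_union, hgene, hent, ← and_or_left]
    exact and_congr_right fun _ => by split_ifs <;> omega
  have hfin (e : ℕ) : {x | IsGeneLeader T x ∧ T.entry x = e}.Finite :=
    hlam.finite_setOf_inShape.subset fun x hx => hx.1.1
  rw [wt, hsplit, Set.ncard_union_eq _ (hfin _) (hfin _), wt, wt]
  exact Set.disjoint_left.mpr fun _ ⟨_, h⟩ ⟨_, h'⟩ => by omega

end Relabel

end GenomicTableau

theorem RegStep.refines_wtPos {lam : ℕ → ℕ} (hlam : IsPartitionFn lam)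
    {T T' : GenomicTableau lam} (h : RegStep T T') : Refines (wtPos T) (wtPos T') := by
  obtain ⟨i, hi, -, -, hent, hgene⟩ := h
  obtain ⟨k, rfl⟩ : ∃ k, i = k + 2 := ⟨i - 2, by omega⟩
  set M := max (max (maxEntry T) (maxEntry T')) (k + 2)
  rw [T.wtPos_eq_posPartRange hlam (M := M) (by omega),
    T'.wtPos_eq_posPartRange hlam (M := M) (by omega)]
  exact refines_posPartRange_merge (by omega)
    (fun _ => GenomicTableau.wt_relabel_of_ne hent hgene)
    (GenomicTableau.wt_relabel_self hlam hent hgene) (GenomicTableau.wt_relabel_succ hent)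

/-- **Lemma.** If `V` is a genomic tableau of shape `λ` and `U = reg(V)`, then the positive
part `wt(V)⁺` of the weight of `V` refines the weight `wt(U)` of `U`. -/
theorem wtPos_refines_of_regularization (lam : ℕ → ℕ) (hlam : IsPartitionFn lam)
    (reg : GenomicTableau lam → GenomicTableau lam)
    (hreg : ∀ T, Relation.ReflTransGen RegStep T (reg T) ∧ IsQY (reg T))
    (V : GenomicTableau lam) :
    Refines (wtPos V) (wtPos (reg V)) := by
  have hsteps := Relation.ReflTransGen.lift wtPos (fun _ _ => RegStep.refines_wtPos hlam)
    V (reg V) (hreg V).1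
  rwa [Relation.reflTransGen_eq_self (r := Refines)] at hsteps
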